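/- Let n be a positive integer and let s be a complex number such that s + j ≠ 0 for j = 1, …, n. Then ∑_{k=1}^{n} ((-1)^{k-1}/k) · C(s+n, k) · (∑_{j=0}^{k-1} 1/(s+n-j)) = ∑_{k=0}^{n-1} (-1)^k · C(s+k, k) / ((k+1)^2 · binom(n, k+1)) + s · ∑_{k=0}^{n-1} ( (-1)^k · C(s+k, k) / ((k+1)^2 · binom(n, k+1)) ) · ∑_{j=1}^{k} 1/(s+j), where binom(n, k+1) is the ordinary binomial coefficient. -/

import Mathlib

/-- Generalized binomial coefficient `C(s,k) = s(s-1)⋯(s-k+1)/k!` for complex `s`. -/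
noncomputable def genChoose (s : ℂ) (k : ℕ) : ℂ :=
  (∏ i ∈ Finset.range k, (s - i)) / (Nat.factorial k)

/-- The `n`-th harmonic number as a complex number. -/
noncomputable def Hc (n : ℕ) : ℂ := ∑ i ∈ Finset.range n, 1 / (i + 1)

/-- The `n`-th generalized harmonic number of order 2 as a complex number. -/
noncomputable def H2c (n : ℕ) : ℂ := ∑ i ∈ Finset.range n, 1 / ((i : ℂ) + 1) ^ 2

/-!
Both sides are derivatives in `s`: the left side is that of
`altChooseSum n (s + n) = ∑ k ∈ Icc 1 n, (-1)^(k-1)/k * C(s+n, k)` (logarithmic differentiation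
of the product defining `C`), the right side that of `Hc n + weightedChooseSum n s`. These two
functions agree by induction on `n`: Pascal's rule and absorption give the increment of
`altChooseSum`, and the increment of `weightedChooseSum` reduces to a telescoping sum in
`(-1)^k * C(s+k, k) / choose n k`. The identity holds on a neighbourhood of `s` (away from the poles
`-1, …, -n`), so the derivatives agree.
-/

open Finset

lemma Finset.sum_Icc_one_eq_sum_range {M : Type*} [AddCommMonoid M] (n : ℕ) (f : ℕ → M) :
    ∑ k ∈ Icc 1 n, f k = ∑ k ∈ range n, f (k + 1) := by
  rw [← Ico_add_one_right_eq_Icc, sum_Ico_eq_sum_range, add_tsub_cancel_right]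
  exact sum_congr rfl fun k _ => by rw [add_comm]

theorem HasDerivAt.finsetProd_eq_mul_sum_div {𝕜 ι : Type*} [NontriviallyNormedField 𝕜]
    [DecidableEq ι] {u : Finset ι} {f : ι → 𝕜 → 𝕜} {f' : ι → 𝕜} {x : 𝕜}
    (hf : ∀ i ∈ u, HasDerivAt (f i) (f' i) x) (hne : ∀ i ∈ u, f i x ≠ 0) :
    HasDerivAt (∏ i ∈ u, f i ·) ((∏ i ∈ u, f i x) * ∑ i ∈ u, f' i / f i x) x := by
  refine (HasDerivAt.fun_finsetProd hf).congr_deriv ?_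
  rw [mul_sum]
  refine sum_congr rfl fun i hi => ?_
  rw [smul_eq_mul, ← mul_prod_erase u (f · x) hi]
  field_simp [hne i hi]

lemma genChoose_zero (x : ℂ) : genChoose x 0 = 1 := by
  simp [genChoose]

lemma genChoose_succ (x : ℂ) (k : ℕ) :
    genChoose x (k + 1) = genChoose x k * (x - k) / (k + 1) := by
  simp only [genChoose, prod_range_succ, Nat.factorial_succ]
  push_cast
  field_simp

lemma succ_mul_genChoose_succ (x : ℂ) (k : ℕ) :
    (k + 1) * genChoose (x + 1) (k + 1) = (x + 1) * genChoose x k := by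
  simp only [genChoose, prod_range_succ', Nat.factorial_succ]
  push_cast
  simp only [add_sub_add_right_eq_sub, sub_zero]
  field_simp

lemma genChoose_succ_succ (x : ℂ) (k : ℕ) :
    genChoose (x + 1) (k + 1) = genChoose x k + genChoose x (k + 1) := by
  have h := succ_mul_genChoose_succ x k
  rw [genChoose_succ x k]
  field_simp
  linear_combination h

lemma hasDerivAt_genChoose (x : ℂ) (k : ℕ) (hx : ∀ i < k, x - i ≠ 0) :
    HasDerivAt (genChoose · k) (genChoose x k * ∑ i ∈ range k, 1 / (x - i)) x := by
  have h := HasDerivAt.finsetProd_eq_mul_sum_div (u := range k)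
    (f := fun (i : ℕ) (t : ℂ) => t - i) (fun i _ => (hasDerivAt_id x).sub_const (i : ℂ))
    (fun i hi => hx i (mem_range.1 hi))
  exact (h.div_const (k.factorial : ℂ)).congr_deriv (by rw [genChoose, div_mul_eq_mul_div])

lemma hasDerivAt_genChoose_add_natCast {s : ℂ} {m k : ℕ} (hk : k ≤ m)
    (hs : ∀ j ∈ Icc 1 m, s + j ≠ 0) :
    HasDerivAt (fun t => genChoose (t + m) k)
      (genChoose (s + m) k * ∑ i ∈ range k, 1 / (s + m - i)) s := by
  refine (hasDerivAt_genChoose (s + m) k fun i hi => ?_).comp_add_const s m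
  have h := hs (m - i) (mem_Icc.2 ⟨by omega, by omega⟩)
  rwa [Nat.cast_sub (by omega), ← add_sub_assoc] at h

lemma sum_range_one_div_add_sub (s : ℂ) (k : ℕ) :
    ∑ i ∈ range k, 1 / (s + k - i) = ∑ j ∈ Icc 1 k, 1 / (s + j) := by
  rw [sum_Icc_one_eq_sum_range, ← sum_range_reflect]
  refine sum_congr rfl fun i hi => ?_
  have hik := mem_range.1 hi
  push_cast [Nat.cast_sub (by omega : i ≤ k - 1), Nat.cast_sub (by omega : 1 ≤ k)]
  ring_nf

lemma hasDerivAt_mul_genChoose {s : ℂ} {k : ℕ} (hs : ∀ j ∈ Icc 1 k, s + j ≠ 0) :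
    HasDerivAt (fun t => t * genChoose (t + k) k)
      (genChoose (s + k) k * (1 + s * ∑ j ∈ Icc 1 k, 1 / (s + j))) s := by
  refine ((hasDerivAt_id s).mul (hasDerivAt_genChoose_add_natCast le_rfl hs)).congr_deriv ?_
  rw [sum_range_one_div_add_sub, id]
  ring

lemma Hc_succ (n : ℕ) : Hc (n + 1) = Hc n + 1 / (n + 1) := by
  rw [Hc, sum_range_succ, Hc]

noncomputable def altChooseSum (n : ℕ) (x : ℂ) : ℂ :=
  ∑ k ∈ range n, (-1) ^ k / (k + 1) * genChoose x (k + 1)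

noncomputable def weightedChooseSum (n : ℕ) (s : ℂ) : ℂ :=
  ∑ k ∈ range n, (-1) ^ k * (s * genChoose (s + k) k) / ((k + 1) ^ 2 * n.choose (k + 1))

lemma sum_range_neg_one_pow_mul_genChoose_succ (x : ℂ) (n : ℕ) :
    ∑ k ∈ range n, (-1) ^ k * genChoose (x + 1) (k + 1) = 1 - (-1) ^ n * genChoose x n := by
  induction n with
  | zero => simp [genChoose_zero]
  | succ n ih =>
    rw [sum_range_succ, ih, genChoose_succ_succ]
    ring

lemma altChooseSum_succ (n : ℕ) {x : ℂ} (hx : x + 1 ≠ 0) :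
    altChooseSum (n + 1) (x + 1) = altChooseSum n x + (-1) ^ n / (n + 1) * genChoose x (n + 1)
      + (1 + (-1) ^ n * genChoose x (n + 1)) / (x + 1) := by
  have hterm : ∀ k ∈ range (n + 1), (-1 : ℂ) ^ k / (k + 1) * genChoose (x + 1) (k + 1)
      = (-1) ^ k / (k + 1) * genChoose x (k + 1)
        + (-1) ^ k * genChoose (x + 1) (k + 1) / (x + 1) := by
    intro k _
    have habs := succ_mul_genChoose_succ x k
    have hpascal := genChoose_succ_succ x k
    field_simp
    linear_combination (x + 1) * hpascal - habs
  rw [altChooseSum, sum_congr rfl hterm, sum_add_distrib, ← sum_div,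
    sum_range_neg_one_pow_mul_genChoose_succ, sum_range_succ, altChooseSum]
  ring

lemma inv_choose_succ_eq_sub {K : Type*} [Field K] [CharZero K] {n k : ℕ} (hk : k < n) :
    ((n + 1).choose (k + 1) : K)⁻¹
      = (n.choose (k + 1) : K)⁻¹ - (k + 1) / ((n + 1) * n.choose (k + 1)) := by
  have h : (n.choose (k + 1) * (n + 1) : K) = (n + 1).choose (k + 1) * (n - k) := by
    have := congrArg (Nat.cast (R := K)) (Nat.choose_mul_succ_eq n (k + 1))
    rw [show n + 1 - (k + 1) = n - k by omega] at this
    push_cast [Nat.cast_sub hk.le] at this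
    exact this
  have h1 : (n.choose (k + 1) : K) ≠ 0 := by exact_mod_cast (Nat.choose_pos hk).ne'
  have h2 : ((n + 1).choose (k + 1) : K) ≠ 0 := by exact_mod_cast (Nat.choose_pos (by omega)).ne'
  field_simp
  linear_combination h

lemma sum_range_neg_one_pow_mul_genChoose_div_choose (n : ℕ) {s : ℂ} (hs : s + n + 1 ≠ 0) :
    ∑ k ∈ range n, (-1) ^ k * genChoose (s + k) k / ((k + 1) * n.choose (k + 1))
      = (1 - (-1) ^ n * genChoose (s + n) n) / (s + n + 1) := by
  set v : ℕ → ℂ := fun k => (-1) ^ k * genChoose (s + k) k / n.choose k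
  have hterm : ∀ k ∈ range n, (-1) ^ k * genChoose (s + k) k / ((k + 1) * n.choose (k + 1))
      = (v k - v (k + 1)) / (s + n + 1) := by
    intro k hk
    have hkn := mem_range.1 hk
    have habs := succ_mul_genChoose_succ (s + k) k
    have hch : (n.choose (k + 1) * (k + 1) : ℂ) = n.choose k * (n - k) := by
      have := Nat.choose_succ_right_eq n k
      rw [← Nat.cast_sub hkn.le]
      exact_mod_cast this
    have h1 : (n.choose k : ℂ) ≠ 0 := by exact_mod_cast (Nat.choose_pos hkn.le).ne'
    have h2 : (n.choose (k + 1) : ℂ) ≠ 0 := by exact_mod_cast (Nat.choose_pos hkn).ne'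
    simp only [v]
    push_cast
    rw [← add_assoc]
    field_simp
    rw [pow_succ]
    linear_combination -(-1) ^ k * genChoose (s + k) k * hch - (-1) ^ k * (n.choose k : ℂ) * habs
  rw [sum_congr rfl hterm, ← sum_div, sum_range_sub']
  simp [v, genChoose_zero]

lemma weightedChooseSum_succ (n : ℕ) {s : ℂ} (hs : s + n + 1 ≠ 0) :
    weightedChooseSum (n + 1) s = weightedChooseSum n s
      + (-1) ^ n * (s * genChoose (s + n) n) / (n + 1) ^ 2
      - s / (n + 1) * ((1 - (-1) ^ n * genChoose (s + n) n) / (s + n + 1)) := by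
  have hterm : ∀ k ∈ range n, (-1 : ℂ) ^ k * (s * genChoose (s + k) k)
        / ((k + 1) ^ 2 * (n + 1).choose (k + 1))
      = (-1) ^ k * (s * genChoose (s + k) k) / ((k + 1) ^ 2 * n.choose (k + 1))
        - s / (n + 1) * ((-1) ^ k * genChoose (s + k) k / ((k + 1) * n.choose (k + 1))) := by
    intro k hk
    simp only [div_eq_mul_inv, mul_inv, inv_choose_succ_eq_sub (K := ℂ) (mem_range.1 hk)]
    field_simp
  rw [weightedChooseSum, sum_range_succ, sum_congr rfl hterm, sum_sub_distrib, ← mul_sum,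
    sum_range_neg_one_pow_mul_genChoose_div_choose n hs, Nat.choose_self, weightedChooseSum]
  push_cast
  ring

lemma altChooseSum_eq (n : ℕ) {s : ℂ} (hs : ∀ j ∈ Icc 1 n, s + j ≠ 0) :
    altChooseSum n (s + n) = Hc n + weightedChooseSum n s := by
  induction n with
  | zero => simp [altChooseSum, weightedChooseSum, Hc]
  | succ n ih =>
    have hsn : s + n + 1 ≠ 0 := by simpa [add_assoc] using hs (n + 1) (by simp)
    rw [Nat.cast_succ, ← add_assoc, altChooseSum_succ n hsn,
      ih fun j hj => hs j (Icc_subset_Icc_right n.le_succ hj), weightedChooseSum_succ n hsn,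
      Hc_succ, genChoose_succ (s + n) n, add_sub_cancel_right]
    field_simp
    ring

lemma hasDerivAt_weightedChooseSum {n : ℕ} {s : ℂ} (hs : ∀ j ∈ Icc 1 n, s + j ≠ 0) :
    HasDerivAt (weightedChooseSum n)
      (∑ k ∈ range n,
        (-1) ^ k * (genChoose (s + k) k * (1 + s * ∑ j ∈ Icc 1 k, 1 / (s + j)))
          / ((k + 1) ^ 2 * n.choose (k + 1))) s :=
  HasDerivAt.fun_sum fun _ hk => ((hasDerivAt_mul_genChoose fun j hj =>
    hs j (Icc_subset_Icc_right (mem_range.1 hk).le hj)).const_mul _).div_const _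

theorem stmt_6_general (n : ℕ) (s : ℂ)
    (hs : ∀ j ∈ Finset.Icc 1 n, s + (j : ℂ) ≠ 0) :
    ∑ k ∈ Finset.Icc 1 n, (-1 : ℂ) ^ (k - 1) / k * genChoose (s + n) k *
        (∑ j ∈ Finset.range k, 1 / (s + n - j)) =
      (∑ k ∈ Finset.range n, (-1 : ℂ) ^ k * genChoose (s + k) k /
          (((k : ℂ) + 1) ^ 2 * (Nat.choose n (k + 1) : ℂ))) +
        s * ∑ k ∈ Finset.range n, (-1 : ℂ) ^ k * genChoose (s + k) k /
          (((k : ℂ) + 1) ^ 2 * (Nat.choose n (k + 1) : ℂ)) *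
          ∑ j ∈ Finset.Icc 1 k, 1 / (s + j) := by
  have hF : HasDerivAt (fun t => ∑ k ∈ Icc 1 n, (-1 : ℂ) ^ (k - 1) / k * genChoose (t + n) k)
      (∑ k ∈ Icc 1 n, (-1 : ℂ) ^ (k - 1) / k * genChoose (s + n) k *
        (∑ j ∈ range k, 1 / (s + n - j))) s :=
    HasDerivAt.fun_sum fun k hk =>
      ((hasDerivAt_genChoose_add_natCast (mem_Icc.1 hk).2 hs).const_mul _).congr_deriv
        (mul_assoc _ _ _).symm
  have hEq : (fun t => ∑ k ∈ Icc 1 n, (-1 : ℂ) ^ (k - 1) / k * genChoose (t + n) k)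
      =ᶠ[nhds s] fun t => Hc n + weightedChooseSum n t := by
    filter_upwards [(Filter.eventually_all_finset _).2 fun (j : ℕ) hj =>
      (continuous_add_const (j : ℂ)).continuousAt.eventually_ne (hs j hj)] with t ht
    rw [← altChooseSum_eq n ht, altChooseSum, sum_Icc_one_eq_sum_range]
    simp
  have hG := ((hasDerivAt_weightedChooseSum hs).const_add (Hc n)).congr_of_eventuallyEq hEq
  rw [hF.unique hG, mul_sum, ← sum_add_distrib]
  exact sum_congr rfl fun k _ => by ring

theorem stmt_6 (n : ℕ) (hn : 0 < n) (s : ℂ)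
    (hs : ∀ j ∈ Finset.Icc 1 n, s + (j : ℂ) ≠ 0) :
    ∑ k ∈ Finset.Icc 1 n, (-1 : ℂ) ^ (k - 1) / k * genChoose (s + n) k *
        (∑ j ∈ Finset.range k, 1 / (s + n - j)) =
      (∑ k ∈ Finset.range n, (-1 : ℂ) ^ k * genChoose (s + k) k /
          (((k : ℂ) + 1) ^ 2 * (Nat.choose n (k + 1) : ℂ))) +
        s * ∑ k ∈ Finset.range n, (-1 : ℂ) ^ k * genChoose (s + k) k /
          (((k : ℂ) + 1) ^ 2 * (Nat.choose n (k + 1) : ℂ)) *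
          ∑ j ∈ Finset.Icc 1 k, 1 / (s + j) :=
  stmt_6_general n s hs
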